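/- arXiv:1901.04044 — 6 statements merged into one kernel-verified Lean document; each statement's English description precedes it below -/
import Mathlib

section
/- For all n ≥ 0, ‖p_{n+1}‖² = ‖p_n‖² − c_{n+1}²/(2n+3), where the norm is the L²([0,1]) norm; consequently ‖p_n‖² = 1 − ∑_{k=1}^{n} c_k²/(2k+1). -/
/-!
Expanding the square, `‖∑ a_k x^k‖²` is the Hilbert-matrix form `∑ a_j a_k / (j + k + 1)`.
Passing from `p_{m-1}` to `p_m = p_{m-1} + c_m x^m` adds the cross term
`2 c_m ∑_{j<m} c_j / (m + 1 + j)` and the diagonal term `c_m² / (2m + 1)`. The defining relation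
of `c` at `m`, i.e. `∫ p_m x^m = 0`, says that the cross sum equals `-c_m / (2m + 1)`, so the net
change is `-c_m² / (2m + 1)`. Summing these decrements from `‖p_0‖² = 1` gives the closed form.
-/

open Finset

theorem Finset.sum_range_succ_sum_range_succ {M : Type*} [AddCommMonoid M] (f : ℕ → ℕ → M)
    (m : ℕ) :
    ∑ j ∈ range (m + 1), ∑ k ∈ range (m + 1), f j k =
      ∑ j ∈ range m, ∑ k ∈ range m, f j k + ∑ j ∈ range m, (f j m + f m j) + f m m := by
  simp only [sum_range_succ, sum_add_distrib]
  abel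

theorem integral_sq_sum_monomials (a : ℕ → ℝ) (m : ℕ) :
    ∫ x in (0:ℝ)..1, (∑ k ∈ range m, a k * x ^ k) ^ 2 =
      ∑ j ∈ range m, ∑ k ∈ range m, a j * a k / (j + k + 1) := by
  have expand : ∀ x : ℝ, (∑ k ∈ range m, a k * x ^ k) ^ 2 =
      ∑ j ∈ range m, ∑ k ∈ range m, a j * a k * x ^ (j + k) := by
    intro x
    rw [sq, sum_mul_sum]
    refine sum_congr rfl fun j _ => sum_congr rfl fun k _ => ?_
    ring
  simp only [expand]
  rw [intervalIntegral.integral_finsetSum fun j _ => by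
    apply Continuous.intervalIntegrable; fun_prop]
  refine sum_congr rfl fun j _ => ?_
  rw [intervalIntegral.integral_finsetSum fun k _ => by
    apply Continuous.intervalIntegrable; fun_prop]
  refine sum_congr rfl fun k _ => ?_
  rw [intervalIntegral.integral_const_mul, integral_pow]
  push_cast
  ring

theorem integral_sq_sum_monomials_succ (a : ℕ → ℝ) (m : ℕ)
    (horth : ∑ k ∈ range (m + 1), a k / (m + 1 + k) = 0) :
    ∫ x in (0:ℝ)..1, (∑ k ∈ range (m + 1), a k * x ^ k) ^ 2 =
      (∫ x in (0:ℝ)..1, (∑ k ∈ range m, a k * x ^ k) ^ 2) - a m ^ 2 / (2 * m + 1) := by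
  have cross : ∑ j ∈ range m, a j / (m + 1 + j) = -(a m / (2 * m + 1)) := by
    rw [sum_range_succ] at horth
    linear_combination horth - (by ring : a m / ((m : ℝ) + 1 + m) = a m / (2 * m + 1))
  have cross_terms : ∑ j ∈ range m, (a j * a m / (j + m + 1) + a m * a j / (m + j + 1)) =
      2 * a m * ∑ j ∈ range m, a j / (m + 1 + j) := by
    rw [mul_sum]
    refine sum_congr rfl fun j _ => ?_
    ring_nf
  rw [integral_sq_sum_monomials, integral_sq_sum_monomials, sum_range_succ_sum_range_succ,
    cross_terms, cross]
  ring

theorem norm_recurrence (c : ℕ → ℚ)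
    (hc0 : c 0 = 1)
    (hrec : ∀ n : ℕ, 1 ≤ n →
      ∑ k ∈ Finset.range (n + 1), c k / ((n : ℚ) + 1 + (k : ℚ)) = 0) :
    (∀ n : ℕ,
      (∫ x in (0:ℝ)..1, (∑ k ∈ Finset.range (n + 2), (c k : ℝ) * x ^ k) ^ 2) =
        (∫ x in (0:ℝ)..1, (∑ k ∈ Finset.range (n + 1), (c k : ℝ) * x ^ k) ^ 2) -
          (c (n + 1) : ℝ) ^ 2 / (2 * (n : ℝ) + 3)) ∧
    (∀ n : ℕ,
      (∫ x in (0:ℝ)..1, (∑ k ∈ Finset.range (n + 1), (c k : ℝ) * x ^ k) ^ 2) =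
        1 - ∑ k ∈ Finset.Icc 1 n, (c k : ℝ) ^ 2 / (2 * (k : ℝ) + 1)) := by
  have step : ∀ n : ℕ,
      (∫ x in (0:ℝ)..1, (∑ k ∈ Finset.range (n + 2), (c k : ℝ) * x ^ k) ^ 2) =
        (∫ x in (0:ℝ)..1, (∑ k ∈ Finset.range (n + 1), (c k : ℝ) * x ^ k) ^ 2) -
          (c (n + 1) : ℝ) ^ 2 / (2 * (n : ℝ) + 3) := by
    intro n
    have horth : ∑ k ∈ range (n + 1 + 1), (c k : ℝ) / ((n + 1 : ℕ) + 1 + k) = 0 := by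
      exact_mod_cast hrec (n + 1) (by omega)
    rw [integral_sq_sum_monomials_succ _ _ horth]
    push_cast
    ring_nf
  refine ⟨step, fun n => ?_⟩
  induction n with
  | zero => simp [hc0]
  | succ n ih =>
    rw [step, ih, sum_Icc_succ_top (by omega)]
    push_cast
    ring
end

section
/- For all n ≥ 2, |c_n| ≤ √(D(n)) · n^{-3/2}, where D(n) = ∫_0^1 p_n'(x)² dx. -/
/-!
Let `φ(x) = xⁿ⁺¹ - xⁿ`. Pairing `p_n'` with `φ` on `[0, 1]` term by term gives
`∑ c_k (n/(n+k) - (n+1)/(n+1+k))`, and the defining relations at `n - 1` and `n` collapse this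
to `c_n / 2`. Cauchy–Schwarz then gives `c_n² / 4 ≤ D(n) ∫₀¹ φ²`, and
`∫₀¹ φ² = 2 / ((2n+1)(2n+2)(2n+3)) ≤ 1 / (4n³)`.
-/

open MeasureTheory Finset

theorem sq_integral_mul_le_integral_sq_mul_integral_sq {α : Type*} [MeasurableSpace α]
    {μ : Measure α} {f g : α → ℝ} (hf : Integrable (fun x => f x ^ 2) μ)
    (hg : Integrable (fun x => g x ^ 2) μ) (hfg : Integrable (fun x => f x * g x) μ) :
    (∫ x, f x * g x ∂μ) ^ 2 ≤ (∫ x, f x ^ 2 ∂μ) * ∫ x, g x ^ 2 ∂μ := by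
  have hquad : ∀ t : ℝ,
      0 ≤ (∫ x, g x ^ 2 ∂μ) * (t * t) + (-2 * ∫ x, f x * g x ∂μ) * t + ∫ x, f x ^ 2 ∂μ := by
    intro t
    have hpt : (fun x => (f x - t * g x) ^ 2)
        = fun x => (f x ^ 2 - 2 * t * (f x * g x)) + t ^ 2 * g x ^ 2 := by
      funext x; ring
    have hlin : Integrable (fun x => f x ^ 2 - 2 * t * (f x * g x)) μ := hf.sub (hfg.const_mul _)
    calc 0 ≤ ∫ x, (f x - t * g x) ^ 2 ∂μ := integral_nonneg fun x => sq_nonneg _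
      _ = _ := by
        rw [hpt, integral_add hlin (hg.const_mul _), integral_sub hf (hfg.const_mul _),
          integral_const_mul, integral_const_mul]
        ring
  have hdiscrim := discrim_le_zero hquad
  unfold discrim at hdiscrim
  nlinarith

theorem intervalIntegral.sq_integral_mul_le_integral_sq_mul_integral_sq {a b : ℝ} (hab : a ≤ b)
    {f g : ℝ → ℝ} (hf : Continuous f) (hg : Continuous g) :
    (∫ x in a..b, f x * g x) ^ 2 ≤ (∫ x in a..b, f x ^ 2) * ∫ x in a..b, g x ^ 2 := by
  simp only [intervalIntegral.integral_of_le hab]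
  exact _root_.sq_integral_mul_le_integral_sq_mul_integral_sq
    (hf.pow 2).integrableOn_Ioc (hg.pow 2).integrableOn_Ioc (hf.mul hg).integrableOn_Ioc

theorem sum_mul_div_sub_div_eq_half {K : Type*} [Field K] [CharZero K] (c : ℕ → K)
    (hrec : ∀ n : ℕ, 1 ≤ n → ∑ k ∈ range (n + 1), c k / ((n : K) + 1 + k) = 0)
    {n : ℕ} (hn : 2 ≤ n) :
    ∑ k ∈ range (n + 1), c k * ((n : K) / (n + k) - (n + 1) / (n + 1 + k)) = c n / 2 := by
  obtain ⟨m, rfl⟩ : ∃ m, n = m + 1 := ⟨n - 1, by omega⟩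
  have hprev : ∑ k ∈ range (m + 1), c k / ((m : K) + 1 + k) = 0 := hrec m (by omega)
  have hcur := hrec (m + 1) (by omega)
  push_cast at hcur ⊢
  calc ∑ k ∈ range (m + 1 + 1),
        c k * (((m : K) + 1) / (m + 1 + k) - (m + 1 + 1) / (m + 1 + 1 + k))
      = ((m : K) + 1) * ∑ k ∈ range (m + 1 + 1), c k / ((m : K) + 1 + k)
        - ((m : K) + 1 + 1) * ∑ k ∈ range (m + 1 + 1), c k / ((m : K) + 1 + 1 + k) := by
        rw [mul_sum, mul_sum, ← sum_sub_distrib]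
        exact sum_congr rfl fun k _ => by ring
    _ = c (m + 1) / 2 := by
        rw [hcur, sum_range_succ, hprev, Nat.cast_add_one, ← two_mul]
        field_simp
        ring

theorem integral_natCast_mul_pow_pred_mul_pow_succ_sub_pow (k : ℕ) {n : ℕ} (hn : 0 < n) :
    ∫ x in (0:ℝ)..1, (k : ℝ) * x ^ (k - 1) * (x ^ (n + 1) - x ^ n)
      = (n : ℝ) / (n + k) - (n + 1) / (n + 1 + k) := by
  rcases k with _ | j
  · simp [hn.ne', (Nat.cast_add_one_pos (α := ℝ) n).ne']
  · have hpt : (fun x : ℝ => ((j + 1 : ℕ) : ℝ) * x ^ (j + 1 - 1) * (x ^ (n + 1) - x ^ n))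
        = fun x => ((j : ℝ) + 1) * x ^ (j + n + 1) - ((j : ℝ) + 1) * x ^ (j + n) := by
      funext x; push_cast; ring
    rw [hpt, intervalIntegral.integral_sub (Continuous.intervalIntegrable (by fun_prop) _ _)
      (Continuous.intervalIntegrable (by fun_prop) _ _)]
    simp only [intervalIntegral.integral_const_mul, integral_pow]
    push_cast
    field_simp
    ring

theorem integral_sum_mul_pow_succ_sub_pow (a : ℕ → ℝ) (N : ℕ) {n : ℕ} (hn : 0 < n) :
    ∫ x in (0:ℝ)..1, (∑ k ∈ range N, a k * k * x ^ (k - 1)) * (x ^ (n + 1) - x ^ n)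
      = ∑ k ∈ range N, a k * ((n : ℝ) / (n + k) - (n + 1) / (n + 1 + k)) := by
  have hpt : ∀ x : ℝ, (∑ k ∈ range N, a k * k * x ^ (k - 1)) * (x ^ (n + 1) - x ^ n)
      = ∑ k ∈ range N, a k * ((k : ℝ) * x ^ (k - 1) * (x ^ (n + 1) - x ^ n)) := fun x => by
    rw [sum_mul]; exact sum_congr rfl fun k _ => by ring
  simp only [hpt]
  rw [intervalIntegral.integral_finsetSum
    fun k _ => Continuous.intervalIntegrable (by fun_prop) _ _]
  simp only [intervalIntegral.integral_const_mul,
    integral_natCast_mul_pow_pred_mul_pow_succ_sub_pow _ hn]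

theorem integral_pow_succ_sub_pow_sq (n : ℕ) :
    ∫ x in (0:ℝ)..1, (x ^ (n + 1) - x ^ n) ^ 2
      = 2 / ((2 * n + 1) * (2 * n + 2) * (2 * n + 3)) := by
  have hpt : (fun x : ℝ => (x ^ (n + 1) - x ^ n) ^ 2)
      = fun x => x ^ (2 * n + 2) - 2 * x ^ (2 * n + 1) + x ^ (2 * n) := by
    funext x; ring
  rw [hpt, intervalIntegral.integral_add (Continuous.intervalIntegrable (by fun_prop) _ _)
      (Continuous.intervalIntegrable (by fun_prop) _ _),
    intervalIntegral.integral_sub (Continuous.intervalIntegrable (by fun_prop) _ _)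
      (Continuous.intervalIntegrable (by fun_prop) _ _)]
  simp only [intervalIntegral.integral_const_mul, integral_pow]
  push_cast
  field_simp
  ring

theorem integral_pow_succ_sub_pow_sq_le {n : ℕ} (hn : 0 < n) :
    ∫ x in (0:ℝ)..1, (x ^ (n + 1) - x ^ n) ^ 2 ≤ 1 / (4 * (n : ℝ) ^ 3) := by
  rw [integral_pow_succ_sub_pow_sq, div_le_div_iff₀ (by positivity) (by positivity)]
  nlinarith [(Nat.cast_pos.mpr hn : (0 : ℝ) < n)]

theorem abs_le_sqrt_mul_rpow_of_sq_le {x D n : ℝ} (hn : 0 < n) (h : x ^ 2 ≤ D / n ^ 3) :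
    |x| ≤ √D * n ^ (-(3 : ℝ) / 2) := by
  calc |x| ≤ √(D / n ^ 3) := Real.abs_le_sqrt h
    _ = √D * n ^ (-(3 : ℝ) / 2) := by
      rw [Real.sqrt_div' _ (by positivity), Real.sqrt_eq_rpow (n ^ 3), ← Real.rpow_natCast,
        ← Real.rpow_mul hn.le, neg_div, Real.rpow_neg hn.le, div_eq_mul_inv]
      norm_num

theorem cn_le_sqrtD_general (c : ℕ → ℚ)
    (hrec : ∀ n : ℕ, 1 ≤ n →
      ∑ k ∈ Finset.range (n + 1), c k / ((n : ℚ) + 1 + (k : ℚ)) = 0) :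
    ∀ n : ℕ, 2 ≤ n →
      |(c n : ℝ)| ≤
        Real.sqrt (∫ x in (0:ℝ)..1,
            (∑ k ∈ Finset.range (n + 1), (c k : ℝ) * (k : ℝ) * x ^ (k - 1)) ^ 2) *
          (n : ℝ) ^ (-(3 : ℝ) / 2) := by
  intro n hn
  set p' : ℝ → ℝ := fun x => ∑ k ∈ range (n + 1), (c k : ℝ) * (k : ℝ) * x ^ (k - 1)
  set D := ∫ x in (0:ℝ)..1, p' x ^ 2
  have hrecℝ : ∀ m : ℕ, 1 ≤ m → ∑ k ∈ range (m + 1), (c k : ℝ) / ((m : ℝ) + 1 + k) = 0 :=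
    fun m hm => by exact_mod_cast hrec m hm
  have hpair : ∫ x in (0:ℝ)..1, p' x * (x ^ (n + 1) - x ^ n) = c n / 2 := by
    rw [integral_sum_mul_pow_succ_sub_pow _ _ (by omega)]
    exact sum_mul_div_sub_div_eq_half _ hrecℝ hn
  have hCS := intervalIntegral.sq_integral_mul_le_integral_sq_mul_integral_sq zero_le_one
    (f := p') (g := fun x => x ^ (n + 1) - x ^ n) (by fun_prop) (by fun_prop)
  rw [hpair] at hCS
  have hD : 0 ≤ D := intervalIntegral.integral_nonneg zero_le_one fun x _ => sq_nonneg _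
  refine abs_le_sqrt_mul_rpow_of_sq_le (by positivity) ?_
  calc (c n : ℝ) ^ 2 = 4 * ((c n : ℝ) / 2) ^ 2 := by ring
    _ ≤ 4 * (D * (1 / (4 * (n : ℝ) ^ 3))) := by
        gcongr
        exact hCS.trans <|
          mul_le_mul_of_nonneg_left (integral_pow_succ_sub_pow_sq_le (by omega)) hD
    _ = D / (n : ℝ) ^ 3 := by ring

theorem cn_le_sqrtD (c : ℕ → ℚ)
    (hc0 : c 0 = 1)
    (hrec : ∀ n : ℕ, 1 ≤ n →
      ∑ k ∈ Finset.range (n + 1), c k / ((n : ℚ) + 1 + (k : ℚ)) = 0) :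
    ∀ n : ℕ, 2 ≤ n →
      |(c n : ℝ)| ≤
        Real.sqrt (∫ x in (0:ℝ)..1,
            (∑ k ∈ Finset.range (n + 1), (c k : ℝ) * (k : ℝ) * x ^ (k - 1)) ^ 2) *
          (n : ℝ) ^ (-(3 : ℝ) / 2) :=
  cn_le_sqrtD_general c hrec
end

section
/- For all n ≥ 1, ∫_0^1 p_n'(x) x^{n+1} dx = s_n, where s_n = c_0 + c_1 + ... + c_n. -/
/-!
Termwise, `∫₀¹ k x^(k-1) x^(n+1) dx = k / (n+1+k) = 1 - (n+1) / (n+1+k)`, so the integral equals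
`s_n` minus `n+1` times the sum `∑ c_k / (n+1+k)`, which vanishes by the defining recurrence.
-/

open Finset

theorem integral_monomial_deriv_mul_pow (k m : ℕ) :
    ∫ x in (0:ℝ)..1, (k : ℝ) * x ^ (k - 1) * x ^ (m + 1) = k / (m + 1 + k) := by
  rcases k with _ | j
  · simp
  · simp_rw [mul_assoc, ← pow_add, intervalIntegral.integral_const_mul, integral_pow]
    norm_num
    field_simp
    ring

theorem integral_sum_deriv_mul_pow (s : Finset ℕ) (a : ℕ → ℝ) (m : ℕ) :
    ∫ x in (0:ℝ)..1, (∑ k ∈ s, a k * k * x ^ (k - 1)) * x ^ (m + 1)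
      = ∑ k ∈ s, a k * k / (m + 1 + k) := by
  simp_rw [sum_mul]
  rw [intervalIntegral.integral_finsetSum
    fun k _ => (by fun_prop : Continuous _).intervalIntegrable 0 1]
  refine sum_congr rfl fun k _ => ?_
  simp_rw [mul_assoc (a k)]
  rw [intervalIntegral.integral_const_mul, integral_monomial_deriv_mul_pow, mul_div_assoc]

theorem sum_mul_div_add_eq_sum_sub (s : Finset ℕ) (a : ℕ → ℝ) {N : ℝ} (hN : 0 < N) :
    ∑ k ∈ s, a k * k / (N + k) = ∑ k ∈ s, a k - N * ∑ k ∈ s, a k / (N + k) := by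
  rw [mul_sum, ← sum_sub_distrib]
  refine sum_congr rfl fun k _ => ?_
  have : N + k ≠ 0 := by positivity
  field_simp
  ring

theorem integral_deriv_eq_partial_sum_general (c : ℕ → ℚ)
    (hrec : ∀ n : ℕ, 1 ≤ n →
      ∑ k ∈ Finset.range (n + 1), c k / ((n : ℚ) + 1 + (k : ℚ)) = 0) :
    ∀ n : ℕ, 1 ≤ n →
      (∫ x in (0:ℝ)..1,
        (∑ k ∈ Finset.range (n + 1), (c k : ℝ) * (k : ℝ) * x ^ (k - 1)) *
          x ^ (n + 1)) = ∑ k ∈ Finset.range (n + 1), (c k : ℝ) := by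
  intro n hn
  have hrec_real : ∑ k ∈ range (n + 1), (c k : ℝ) / ((n : ℝ) + 1 + k) = 0 := by
    exact_mod_cast hrec n hn
  rw [integral_sum_deriv_mul_pow, sum_mul_div_add_eq_sum_sub _ _ (by positivity), hrec_real,
    mul_zero, sub_zero]

theorem integral_deriv_eq_partial_sum (c : ℕ → ℚ)
    (hc0 : c 0 = 1)
    (hrec : ∀ n : ℕ, 1 ≤ n →
      ∑ k ∈ Finset.range (n + 1), c k / ((n : ℚ) + 1 + (k : ℚ)) = 0) :
    ∀ n : ℕ, 1 ≤ n →
      (∫ x in (0:ℝ)..1,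
        (∑ k ∈ Finset.range (n + 1), (c k : ℝ) * (k : ℝ) * x ^ (k - 1)) *
          x ^ (n + 1)) = ∑ k ∈ Finset.range (n + 1), (c k : ℝ) :=
  integral_deriv_eq_partial_sum_general c hrec
end

section
/- For every n ≥ 1, D(n) ≤ n s_n² + (n+1) c_n²/2 + ∑_{k=0}^{n−1} (k+1) c_k². -/
/-!
`D(n)` is the Hilbert-matrix quadratic form `∑ a_j a_k / (j + k + 1)` in the coefficients
`a_j = (j + 1) c_{j+1}` of `p_n'`. Passing from `n` to `n + 1` adds the cross term
`2 a_n ∑_{k<n} a_k / (n + k + 1)`, which the recurrence for `(c_k)` at `n - 1` evaluates to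
`2 a_n (s_n - c_n / 2)`. With that, the growth of the form is dominated by the growth of the
right-hand side, the difference being a sum of squares; so `D(n)` minus the bound is
nonincreasing from `n = 2` on, and the cases `n = 1, 2` follow from `c_1 = -3/2`, `c_2 = 5/24`.
-/

open Finset

section HilbertForm

variable {K : Type*} [Field K]

def hilbertForm (a : ℕ → K) (n : ℕ) : K :=
  ∑ j ∈ range n, ∑ k ∈ range n, a j * a k / ((j : K) + k + 1)

theorem hilbertForm_succ (a : ℕ → K) (n : ℕ) :
    hilbertForm a (n + 1) = hilbertForm a n
      + 2 * a n * ∑ k ∈ range n, a k / ((n : K) + k + 1) + a n ^ 2 / (2 * n + 1) := by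
  have hcol : ∑ j ∈ range n, a j * a n / ((j : K) + n + 1)
      = a n * ∑ k ∈ range n, a k / ((n : K) + k + 1) := by
    rw [mul_sum]
    exact sum_congr rfl fun k _ => by ring
  have hrow : ∑ k ∈ range n, a n * a k / ((n : K) + k + 1)
      = a n * ∑ k ∈ range n, a k / ((n : K) + k + 1) := by
    simp only [mul_div_assoc, mul_sum]
  simp only [hilbertForm, sum_range_succ, sum_add_distrib, hcol, hrow]
  ring

end HilbertForm

theorem integral_sq_sum_pow_eq_hilbertForm (a : ℕ → ℝ) (n : ℕ) :
    ∫ x in (0 : ℝ)..1, (∑ k ∈ range n, a k * x ^ k) ^ 2 = hilbertForm a n := by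
  have hexpand : ∀ x : ℝ, (∑ k ∈ range n, a k * x ^ k) ^ 2
      = ∑ j ∈ range n, ∑ k ∈ range n, a j * a k * x ^ (j + k) := fun x => by
    rw [sq, sum_mul_sum]
    exact sum_congr rfl fun j _ => sum_congr rfl fun k _ => by ring
  simp_rw [hexpand]
  rw [intervalIntegral.integral_finsetSum fun j _ =>
    (by fun_prop : Continuous _).intervalIntegrable _ _]
  refine sum_congr rfl fun j _ => ?_
  rw [intervalIntegral.integral_finsetSum fun k _ =>
    (by fun_prop : Continuous _).intervalIntegrable _ _]
  refine sum_congr rfl fun k _ => ?_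
  rw [intervalIntegral.integral_const_mul, integral_pow]
  push_cast
  ring

def derivCoeffs {R : Type*} [Semiring R] (c : ℕ → R) (j : ℕ) : R := c (j + 1) * (j + 1)

theorem sum_mul_pow_pred_eq {R : Type*} [CommSemiring R] (c : ℕ → R) (n : ℕ) (x : R) :
    ∑ k ∈ range (n + 1), c k * k * x ^ (k - 1) = ∑ j ∈ range n, derivCoeffs c j * x ^ j := by
  rw [sum_range_succ']
  simp [derivCoeffs]

theorem sum_derivCoeffs_div_eq {K : Type*} [Field K] [CharZero K] (c : ℕ → K) (m : ℕ) :
    ∑ k ∈ range (m + 1), derivCoeffs c k / (((m + 1 : ℕ) : K) + k + 1)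
      = ∑ k ∈ range (m + 2), c k - c (m + 1) / 2
        - (m + 1) * ∑ k ∈ range (m + 1), c k / ((m : K) + 1 + k) := by
  have hne : ∀ k : ℕ, (m : K) + 1 + k ≠ 0 := fun k => by
    rw [add_right_comm]; exact_mod_cast (m + k).succ_ne_zero
  have hshift : ∑ k ∈ range (m + 1), derivCoeffs c k / (((m + 1 : ℕ) : K) + k + 1)
      = ∑ j ∈ range (m + 2), c j * j / ((m : K) + 1 + j) := by
    simp only [derivCoeffs]
    rw [sum_range_succ' (fun j => c j * j / ((m : K) + 1 + j))]
    push_cast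
    simp only [mul_zero, zero_div, add_zero, add_assoc]
  have hsplit : ∀ j : ℕ, c j * j / ((m : K) + 1 + j) = c j - (m + 1) * (c j / ((m : K) + 1 + j)) :=
    fun j => by field_simp [hne j]; ring
  rw [hshift, sum_congr rfl fun j _ => hsplit j, sum_sub_distrib, ← mul_sum,
    sum_range_succ (fun j => c j / ((m : K) + 1 + j))]
  have h2 : (m : K) + 1 + ((m + 1 : ℕ) : K) ≠ 0 := hne _
  push_cast at h2 ⊢
  field_simp
  ring

theorem two_mul_sub_add_sq_div_le {K : Type*} [Field K] [LinearOrder K] [IsStrictOrderedRing K]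
    (ν s a b : K) (hν : 0 ≤ ν) :
    2 * (a * (ν + 1)) * (s - b / 2) + (a * (ν + 1)) ^ 2 / (2 * ν + 1)
      ≤ (ν + 1) * (s + a) ^ 2 - ν * s ^ 2 + (ν + 2) * a ^ 2 / 2 + (ν + 1) * b ^ 2 / 2 := by
  have hd : 0 < 2 * ν + 1 := by positivity
  have hgap : (ν + 1) * (s + a) ^ 2 - ν * s ^ 2 + (ν + 2) * a ^ 2 / 2 + (ν + 1) * b ^ 2 / 2
      - (2 * (a * (ν + 1)) * (s - b / 2) + (a * (ν + 1)) ^ 2 / (2 * ν + 1))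
      = (2 * (2 * ν + 1) * s ^ 2 + (2 * (ν + 1) ^ 2 - 1) * a ^ 2
          + (ν + 1) * (2 * ν + 1) * (a + b) ^ 2) / (2 * (2 * ν + 1)) := by
    field_simp
    ring
  have : 0 ≤ 2 * (ν + 1) ^ 2 - 1 := by nlinarith
  linarith [show 0 ≤ (2 * (2 * ν + 1) * s ^ 2 + (2 * (ν + 1) ^ 2 - 1) * a ^ 2
          + (ν + 1) * (2 * ν + 1) * (a + b) ^ 2) / (2 * (2 * ν + 1)) by positivity]

section Bound

variable {K : Type*} [Field K] [LinearOrder K] [IsStrictOrderedRing K]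

def dirichletBound (c : ℕ → K) (n : ℕ) : K :=
  n * (∑ k ∈ range (n + 1), c k) ^ 2 + (n + 1) * c n ^ 2 / 2 + ∑ k ∈ range n, (k + 1) * c k ^ 2

theorem dirichletBound_succ_sub (c : ℕ → K) (n : ℕ) :
    dirichletBound c (n + 1) - dirichletBound c n
      = (n + 1) * (∑ k ∈ range (n + 1), c k + c (n + 1)) ^ 2 - n * (∑ k ∈ range (n + 1), c k) ^ 2
        + (n + 2) * c (n + 1) ^ 2 / 2 + (n + 1) * c n ^ 2 / 2 := by
  simp only [dirichletBound, sum_range_succ _ (n + 1), sum_range_succ _ n]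
  push_cast
  ring

theorem hilbertForm_sub_dirichletBound_succ_le (c : ℕ → K) (m : ℕ)
    (hrec : ∑ k ∈ range (m + 1), c k / ((m : K) + 1 + k) = 0) :
    hilbertForm (derivCoeffs c) (m + 1 + 1) - dirichletBound c (m + 1 + 1)
      ≤ hilbertForm (derivCoeffs c) (m + 1) - dirichletBound c (m + 1) := by
  have hinc := two_mul_sub_add_sq_div_le ((m + 1 : ℕ) : K) (∑ k ∈ range (m + 2), c k) (c (m + 2))
    (c (m + 1)) (Nat.cast_nonneg _)
  have hR := dirichletBound_succ_sub c (m + 1)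
  have hS := sum_derivCoeffs_div_eq c m
  rw [hrec, mul_zero, sub_zero] at hS
  rw [hilbertForm_succ, hS, derivCoeffs]
  push_cast at hinc hR ⊢
  linarith

theorem hilbertForm_derivCoeffs_le_dirichletBound (c : ℕ → K) (hc0 : c 0 = 1)
    (hrec : ∀ n : ℕ, 1 ≤ n → ∑ k ∈ range (n + 1), c k / ((n : K) + 1 + k) = 0)
    (n : ℕ) (hn : 1 ≤ n) :
    hilbertForm (derivCoeffs c) n ≤ dirichletBound c n := by
  have hc1 : c 1 = -3 / 2 := by
    have h := hrec 1 le_rfl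
    norm_num [sum_range_succ, hc0] at h
    linarith
  have hc2 : c 2 = 5 / 24 := by
    have h := hrec 2 (by norm_num)
    norm_num [sum_range_succ, hc0, hc1] at h
    linarith
  obtain rfl | hn2 := hn.eq_or_lt
  · norm_num [hilbertForm, dirichletBound, derivCoeffs, sum_range_succ, hc0, hc1]
  induction n, hn2 using Nat.le_induction with
  | base => norm_num [hilbertForm, dirichletBound, derivCoeffs, sum_range_succ, hc0, hc1, hc2]
  | succ n hn ih =>
    obtain ⟨m, rfl⟩ : ∃ m, n = m + 1 := ⟨n - 1, by omega⟩
    linarith [hilbertForm_sub_dirichletBound_succ_le c m (hrec m (by omega)), ih (by omega)]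

end Bound

theorem D_upper_bound (c : ℕ → ℚ)
    (hc0 : c 0 = 1)
    (hrec : ∀ n : ℕ, 1 ≤ n →
      ∑ k ∈ Finset.range (n + 1), c k / ((n : ℚ) + 1 + (k : ℚ)) = 0) :
    ∀ n : ℕ, 1 ≤ n →
      (∫ x in (0:ℝ)..1,
        (∑ k ∈ Finset.range (n + 1), (c k : ℝ) * (k : ℝ) * x ^ (k - 1)) ^ 2) ≤
      (n : ℝ) * (∑ k ∈ Finset.range (n + 1), (c k : ℝ)) ^ 2 +
        ((n : ℝ) + 1) * (c n : ℝ) ^ 2 / 2 +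
        ∑ k ∈ Finset.range n, ((k : ℝ) + 1) * (c k : ℝ) ^ 2 := by
  intro n hn
  have hrecℝ : ∀ n : ℕ, 1 ≤ n → ∑ k ∈ range (n + 1), (c k : ℝ) / ((n : ℝ) + 1 + k) = 0 :=
    fun n hn => by exact_mod_cast hrec n hn
  simp_rw [sum_mul_pow_pred_eq, integral_sq_sum_pow_eq_hilbertForm]
  exact hilbertForm_derivCoeffs_le_dirichletBound (fun k => (c k : ℝ)) (by simp [hc0]) hrecℝ n hn
end

section
/- For every n ≥ 1, c_n = (−1)^n (2n+1)!! det(A_n), where A_n is the n×n matrix with (A_n)_{ij} = 1/(i+j) if j ≤ i+1 and 0 otherwise. -/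
/-!
For `n ≥ 1` the numbers `c 1, …, c n` solve the lower triangular system whose `(i, k)` entry is
`1/(i+1+k)` (`1 ≤ k ≤ i ≤ n`) with right-hand side `-c 0/(i+1)`. Its determinant is
`∏ 1/(2i+1)`, so Cramer's rule gives `c n` as that product's inverse times the determinant of the
system matrix with its last column replaced by the right-hand side. That matrix is `A_n` with its
first column negated and moved to the end, whose determinant is `(-1)^n det A_n`.
-/

open Finset Matrix

namespace Matrix

variable {n α : Type*} [Fintype n] [DecidableEq n] [CommRing α]

theorem det_mul_apply_eq_det_updateCol {A : Matrix n n α} {x b : n → α}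
    (h : A *ᵥ x = b) (i : n) : A.det * x i = (A.updateCol i b).det := by
  rw [← cramer_apply, cramer_eq_adjugate_mulVec, ← h, mulVec_mulVec, adjugate_mul,
    smul_mulVec, one_mulVec, Pi.smul_apply, smul_eq_mul]

theorem det_updateCol_last_neg_col_zero {m : ℕ} (A M : Matrix (Fin (m + 1)) (Fin (m + 1)) α)
    (hM : ∀ i (j : Fin m), M i j.castSucc = A i j.succ) :
    (M.updateCol (Fin.last m) (-fun i => A i 0)).det = (-1) ^ (m + 1) * A.det := by
  have hrot : M.updateCol (Fin.last m) (-fun i => A i 0) =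
      (A.updateCol 0 ((-1 : α) • fun i => A i 0)).submatrix id (finRotate (m + 1)) := by
    ext i j
    cases j using Fin.lastCases with
    | last => simp
    | cast j => simp [hM, Fin.succ_ne_zero]
  rw [hrot, det_permute', det_updateCol_smul, updateCol_eq_self, sign_finRotate]
  simp [pow_succ]

end Matrix

theorem prod_range_succ_two_mul_add_one {R : Type*} [CommSemiring R] (n : ℕ) :
    ∏ i ∈ range (n + 1), (2 * (i : R) + 1) = ∏ i ∈ range n, (2 * (i : R) + 3) := by
  rw [prod_range_succ']
  simp only [Nat.cast_add, Nat.cast_one, Nat.cast_zero, mul_zero, zero_add, mul_one]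
  exact prod_congr rfl fun i _ => by ring

def hessenbergHilbert (n : ℕ) : Matrix (Fin n) (Fin n) ℚ := fun i j =>
  if (j : ℕ) + 1 ≤ (i : ℕ) + 2 then 1 / (((i : ℕ) : ℚ) + 1 + (((j : ℕ) : ℚ) + 1)) else 0

/-- Row `i` holds the coefficients of `c 1, …, c n` in the recurrence at index `i + 1`. -/
def recurrenceMatrix (n : ℕ) : Matrix (Fin n) (Fin n) ℚ := fun i j =>
  if j ≤ i then 1 / ((i : ℚ) + (j : ℚ) + 3) else 0

theorem hessenbergHilbert_apply_zero {n : ℕ} (i : Fin (n + 1)) :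
    hessenbergHilbert (n + 1) i 0 = 1 / ((i : ℚ) + 2) := by
  simp [hessenbergHilbert]
  ring

theorem recurrenceMatrix_apply_castSucc {n : ℕ} (i : Fin (n + 1)) (j : Fin n) :
    recurrenceMatrix (n + 1) i j.castSucc = hessenbergHilbert (n + 1) i j.succ := by
  simp only [recurrenceMatrix, hessenbergHilbert, Fin.le_def, Fin.val_castSucc, Fin.val_succ]
  congr 1
  · simp
  · push_cast; ring

theorem det_recurrenceMatrix (n : ℕ) :
    (recurrenceMatrix n).det = (∏ i ∈ range n, (2 * (i : ℚ) + 3))⁻¹ := by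
  rw [det_of_isLowerTriangular (recurrenceMatrix n) fun i j hij => if_neg (not_le.mpr hij),
    ← Fin.prod_univ_eq_prod_range, ← prod_inv_distrib]
  refine prod_congr rfl fun i _ => ?_
  simp only [recurrenceMatrix, le_refl, if_true]
  ring

theorem recurrenceMatrix_mulVec {c : ℕ → ℚ}
    (hrec : ∀ n : ℕ, 1 ≤ n → ∑ k ∈ range (n + 1), c k / ((n : ℚ) + 1 + (k : ℚ)) = 0)
    (n : ℕ) :
    recurrenceMatrix n *ᵥ (fun k => c (k + 1)) = fun i : Fin n => -(c 0 / ((i : ℚ) + 2)) := by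
  ext i
  have h := hrec (i + 1) (by omega)
  rw [sum_range_succ'] at h
  rw [eq_neg_iff_add_eq_zero, ← h]
  simp only [mulVec, dotProduct, recurrenceMatrix, ite_mul, zero_mul]
  rw [← sum_filter, filter_ge_eq_Iic, Nat.range_succ_eq_Iic, ← Fin.map_valEmbedding_Iic, sum_map]
  congr 1
  · refine sum_congr rfl fun k _ => ?_
    simp only [Fin.valEmbedding_apply]
    push_cast; ring
  · push_cast; ring

theorem cn_det_formula (c : ℕ → ℚ)
    (hc0 : c 0 = 1)
    (hrec : ∀ n : ℕ, 1 ≤ n →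
      ∑ k ∈ Finset.range (n + 1), c k / ((n : ℚ) + 1 + (k : ℚ)) = 0) :
    ∀ n : ℕ, 1 ≤ n →
      c n = (-1) ^ n * (∏ i ∈ Finset.range (n + 1), (2 * (i : ℚ) + 1)) *
        Matrix.det (fun i j : Fin n =>
          if (j : ℕ) + 1 ≤ (i : ℕ) + 2 then
            1 / (((i : ℕ) : ℚ) + 1 + (((j : ℕ) : ℚ) + 1))
          else 0) := by
  intro n hn
  obtain ⟨m, rfl⟩ := Nat.exists_eq_add_of_le' hn
  have hrhs : (fun i : Fin (m + 1) => -(c 0 / ((i : ℚ) + 2))) =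
      -fun i => hessenbergHilbert (m + 1) i 0 := by
    ext i
    simp [hc0, hessenbergHilbert_apply_zero]
  have hcramer :=
    det_mul_apply_eq_det_updateCol (recurrenceMatrix_mulVec hrec (m + 1)) (Fin.last m)
  rw [hrhs, det_updateCol_last_neg_col_zero _ _ recurrenceMatrix_apply_castSucc,
    det_recurrenceMatrix, Fin.val_last] at hcramer
  have hprod : ∏ i ∈ range (m + 1), (2 * (i : ℚ) + 3) ≠ 0 := by positivity
  change c (m + 1) = _ * _ * (hessenbergHilbert (m + 1)).det
  rw [prod_range_succ_two_mul_add_one, mul_right_comm, ← hcramer, mul_comm, ← mul_assoc,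
    mul_inv_cancel₀ hprod, one_mul]
end

section
/- For every n ≥ 0, the 2-adic valuation of c_n is v_2(c_n) = −(2n − b(n)), where b(n) is the number of ones in the binary expansion of n; equivalently |c_n|_2 = 2^{2n − b(n)}. In particular c_n ≠ 0 for all n. -/
/-!
By strong induction, `|c n|₂ = |2 ^ n * n !|₂⁻¹`. In the recurrence for `n = m + 1` the last
term `c (m+1) / (2m+3)` has an odd denominator, the term `c m / (2m+2)` has norm exactly
`|2 ^ (m+1) * (m+1)!|₂⁻¹`, and every earlier term `c k / (m+2+k)` is strictly smaller: an even
denominator `2j` has `k < j ≤ m`, so its extra factor `j` is absorbed into `(m+1)!`. By the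
ultrametric inequality `c (m+1)` has the norm of the dominant term, and Legendre's formula
turns `v₂(2 ^ n * n !)` into `2n - b(n)`.
-/

open Finset Nat

section padicNorm

variable {p : ℕ} [Fact p.Prime]

lemma padicNorm_sum_add_eq_of_lt {ι : Type*} {s : Finset ι} {f : ι → ℚ} {x : ℚ}
    (h : ∀ i ∈ s, padicNorm p (f i) < padicNorm p x) :
    padicNorm p (∑ i ∈ s, f i + x) = padicNorm p x := by
  rcases s.eq_empty_or_nonempty with rfl | hs
  · simp
  · have hlt := padicNorm.sum_lt hs h
    rw [padicNorm.add_eq_max_of_ne hlt.ne, max_eq_right hlt.le]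

lemma padicNorm_natCast_pos {a : ℕ} (ha : a ≠ 0) : 0 < padicNorm p a :=
  (padicNorm.nonneg _).lt_of_ne' (padicNorm.nonzero (Nat.cast_ne_zero.mpr ha))

lemma padicNorm_natCast_lt_of_mul_dvd {a b : ℕ} (ha : a ≠ 0) (h : p * a ∣ b) :
    padicNorm p b < padicNorm p a := by
  obtain ⟨c, rfl⟩ := h
  have hp : (1 : ℚ) < p := mod_cast (Fact.out : p.Prime).one_lt
  calc padicNorm p ↑(p * a * c) = (p : ℚ)⁻¹ * padicNorm p a * padicNorm p c := by
        push_cast; rw [padicNorm.mul, padicNorm.mul, padicNorm.padicNorm_p_of_prime]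
    _ ≤ (p : ℚ)⁻¹ * padicNorm p a :=
        mul_le_of_le_one_right (mul_nonneg (by positivity) (padicNorm.nonneg _))
          (padicNorm.of_nat c)
    _ < padicNorm p a :=
        mul_lt_of_lt_one_left (padicNorm_natCast_pos ha) (inv_lt_one_of_one_lt₀ hp)

lemma padicValRat_eq_neg_of_padicNorm_eq_inv {q r : ℚ} (hr : r ≠ 0)
    (h : padicNorm p q = (padicNorm p r)⁻¹) : q ≠ 0 ∧ padicValRat p q = -padicValRat p r := by
  have hq : q ≠ 0 := fun hq ↦ inv_ne_zero (padicNorm.nonzero hr) (by rw [← h, hq, padicNorm.zero])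
  have hp : (1 : ℚ) < p := mod_cast (Fact.out : p.Prime).one_lt
  refine ⟨hq, ?_⟩
  rw [padicNorm.eq_zpow_of_nonzero hq, padicNorm.eq_zpow_of_nonzero hr, ← zpow_neg,
    zpow_right_inj₀ (by positivity) hp.ne'] at h
  exact neg_inj.mp h

end padicNorm

lemma padicValNat_two_pow_mul_factorial (n : ℕ) :
    (padicValNat 2 (2 ^ n * n !) : ℤ) = 2 * n - (Nat.digits 2 n).sum := by
  have hlegendre := sub_one_mul_padicValNat_factorial (p := 2) n
  have hdigits := Nat.digit_sum_le 2 n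
  rw [padicValNat.mul (by positivity) (factorial_ne_zero n), padicValNat.prime_pow]
  omega

lemma padicNorm_two_pow_mul_factorial_lt {k m : ℕ} (hkm : k < m) :
    padicNorm 2 (2 ^ (m + 1) * (m + 1)! : ℕ) < padicNorm 2 (2 ^ k * k ! * (m + 2 + k) : ℕ) := by
  rcases Nat.even_or_odd (m + 2 + k) with ⟨j, hj⟩ | hodd
  · apply padicNorm_natCast_lt_of_mul_dvd (by positivity)
    have hfact : k ! * j ∣ (m + 1)! :=
      calc k ! * j ∣ (j - 1)! * j := mul_dvd_mul_right (factorial_dvd_factorial (by omega)) j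
        _ = j ! := by rw [mul_comm, mul_factorial_pred (by omega)]
        _ ∣ (m + 1)! := factorial_dvd_factorial (by omega)
    calc 2 * (2 ^ k * k ! * (m + 2 + k)) = 2 ^ (k + 2) * (k ! * j) := by rw [hj]; ring
      _ ∣ 2 ^ (m + 1) * (m + 1)! := mul_dvd_mul (pow_dvd_pow 2 (by omega)) hfact
  · have hunit : padicNorm 2 (m + 2 + k : ℕ) = 1 :=
      (padicNorm.nat_eq_one_iff _).mpr (Nat.not_even_iff_odd.mpr hodd ∘ even_iff_two_dvd.mpr)
    rw [Nat.cast_mul (2 ^ k * k !), padicNorm.mul, hunit, mul_one]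
    apply padicNorm_natCast_lt_of_mul_dvd (by positivity)
    rw [← mul_assoc, ← pow_succ']
    exact mul_dvd_mul (pow_dvd_pow 2 (by omega)) (factorial_dvd_factorial (by omega))

lemma padicNorm_succ_of_recurrence {c : ℕ → ℚ} {m : ℕ}
    (hrec : ∑ k ∈ range (m + 1 + 1), c k / (((m + 1 : ℕ) : ℚ) + 1 + k) = 0)
    (ih : ∀ k ≤ m, padicNorm 2 (c k) = (padicNorm 2 (2 ^ k * k ! : ℕ))⁻¹) :
    padicNorm 2 (c (m + 1)) = (padicNorm 2 (2 ^ (m + 1) * (m + 1)! : ℕ))⁻¹ := by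
  have hden : ∀ k : ℕ, ((m + 1 : ℕ) : ℚ) + 1 + k = (m + 2 + k : ℕ) := fun k ↦ by push_cast; ring
  have hterm : ∀ k ≤ m, padicNorm 2 (c k / (m + 2 + k : ℕ)) =
      (padicNorm 2 (2 ^ k * k ! * (m + 2 + k) : ℕ))⁻¹ := fun k hk ↦ by
    rw [padicNorm.div, ih k hk, Nat.cast_mul (2 ^ k * k !), padicNorm.mul, mul_inv, div_eq_mul_inv]
  have hmain : 2 ^ m * m ! * (m + 2 + m) = 2 ^ (m + 1) * (m + 1)! := by
    rw [factorial_succ]; ring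
  have hodd : padicNorm 2 (m + 2 + (m + 1) : ℕ) = 1 :=
    (padicNorm.nat_eq_one_iff _).mpr (by omega)
  simp only [hden, sum_range_succ] at hrec
  have hpartial : padicNorm 2 (∑ k ∈ range m, c k / (m + 2 + k : ℕ) + c m / (m + 2 + m : ℕ)) =
      (padicNorm 2 (2 ^ (m + 1) * (m + 1)! : ℕ))⁻¹ := by
    rw [padicNorm_sum_add_eq_of_lt, hterm m le_rfl, hmain]
    intro k hk
    have hk := mem_range.mp hk
    rw [hterm k hk.le, hterm m le_rfl, hmain]
    exact inv_strictAnti₀ (padicNorm_natCast_pos (by positivity))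
      (padicNorm_two_pow_mul_factorial_lt hk)
  rwa [eq_neg_of_add_eq_zero_left hrec, padicNorm.neg, padicNorm.div, hodd, div_one] at hpartial

lemma padicNorm_eq_of_recurrence (c : ℕ → ℚ) (hc0 : c 0 = 1)
    (hrec : ∀ n : ℕ, 1 ≤ n →
      ∑ k ∈ Finset.range (n + 1), c k / ((n : ℚ) + 1 + (k : ℚ)) = 0) (n : ℕ) :
    padicNorm 2 (c n) = (padicNorm 2 (2 ^ n * n ! : ℕ))⁻¹ := by
  induction n using Nat.strong_induction_on with
  | _ n ih =>
    cases n with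
    | zero => simp [hc0]
    | succ m =>
      exact padicNorm_succ_of_recurrence (hrec (m + 1) (by omega)) fun k hk ↦ ih k (by omega)

theorem two_adic_valuation (c : ℕ → ℚ)
    (hc0 : c 0 = 1)
    (hrec : ∀ n : ℕ, 1 ≤ n →
      ∑ k ∈ Finset.range (n + 1), c k / ((n : ℚ) + 1 + (k : ℚ)) = 0) :
    ∀ n : ℕ, c n ≠ 0 ∧
      padicValRat 2 (c n) = -((2 * n : ℤ) - ((Nat.digits 2 n).sum : ℤ)) := by
  intro n
  obtain ⟨hne, hval⟩ := padicValRat_eq_neg_of_padicNorm_eq_inv (by positivity)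
    (padicNorm_eq_of_recurrence c hc0 hrec n)
  rw [hval, padicValRat.of_nat, padicValNat_two_pow_mul_factorial]
  exact ⟨hne, rfl⟩
end
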